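/- Let ε > 0, Δ ≥ 1 a natural number, and k a natural number. Consider the RAPPOR bit-flipping mechanism on length-k bitvectors which outputs each bit independently, producing output bit 1 with probability e^{ε/(2Δ)}/(e^{ε/(2Δ)}+1) if the input bit is 1 and with probability 1/(e^{ε/(2Δ)}+1) if the input bit is 0. Then for any two input bitvectors B1, B2 ∈ {0,1}^k that differ in at most 2Δ positions and any output bitvector B' ∈ {0,1}^k, the product over all k coordinates of the per-bit output probabilities satisfies Pr[output B' on input B1] ≤ e^ε · Pr[output B' on input B2]. -/

import Mathlib

/-- Per-bit output probability of the RAPPOR bit-flipping mechanism: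
the probability of producing output bit `bout` from input bit `bin`,
where output bit 1 is produced with probability
`exp(ε/(2Δ))/(exp(ε/(2Δ))+1)` if the input bit is 1 and
`1/(exp(ε/(2Δ))+1)` if the input bit is 0. -/
noncomputable def rapporBitProb (ε : ℝ) (Δ : ℕ) (bin bout : Bool) : ℝ :=
  let a : ℝ := Real.exp (ε / (2 * Δ)) / (Real.exp (ε / (2 * Δ)) + 1)
  let b : ℝ := 1 / (Real.exp (ε / (2 * Δ)) + 1)
  if bout then (if bin then a else b) else (if bin then 1 - a else 1 - b)

lemma rapporBitProb_eq (ε : ℝ) (Δ : ℕ) (x c : Bool) :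
    rapporBitProb ε Δ x c =
      if x = c then Real.exp (ε / (2 * Δ)) / (Real.exp (ε / (2 * Δ)) + 1)
      else 1 / (Real.exp (ε / (2 * Δ)) + 1) := by
  have h : (0:ℝ) < Real.exp (ε / (2 * Δ)) + 1 := by positivity
  unfold rapporBitProb
  cases x <;> cases c <;> simp <;> field_simp <;> ring

lemma rapporBitProb_nonneg (ε : ℝ) (Δ : ℕ) (x c : Bool) : 0 ≤ rapporBitProb ε Δ x c := by
  rw [rapporBitProb_eq]
  split <;> positivity

lemma rapporBitProb_key (ε : ℝ) (Δ : ℕ) (hε : 0 ≤ ε / (2 * Δ)) (x y c : Bool) :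
    rapporBitProb ε Δ x c ≤
      (if x = y then 1 else Real.exp (ε / (2 * Δ))) * rapporBitProb ε Δ y c := by
  have he : (1:ℝ) ≤ Real.exp (ε / (2 * (Δ:ℝ))) := Real.one_le_exp hε
  have h : (0:ℝ) < Real.exp (ε / (2 * Δ)) + 1 := by positivity
  rw [rapporBitProb_eq, rapporBitProb_eq]
  by_cases hxy : x = y
  · simp [hxy]
  · simp only [hxy, if_false]
    by_cases hxc : x = c
    · have hyc : ¬ (y = c) := fun h' => hxy (hxc.trans h'.symm)
      rw [if_pos hxc, if_neg hyc, mul_one_div]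
    · have hyc : y = c := by
        cases x <;> cases y <;> cases c <;> simp_all
      rw [if_neg hxc, if_pos hyc, ← mul_div_assoc, div_le_div_iff₀ h h]
      nlinarith

/-- RAPPOR's bit flipping satisfies ε-LDP for inputs differing in at most 2Δ positions. -/
theorem rappor_satisfies_ldp (ε : ℝ) (hε : 0 < ε) (Δ : ℕ) (hΔ : 1 ≤ Δ) (k : ℕ)
    (B1 B2 B' : Fin k → Bool)
    (hdiff : (Finset.univ.filter (fun i => B1 i ≠ B2 i)).card ≤ 2 * Δ) :
    (∏ i, rapporBitProb ε Δ (B1 i) (B' i))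
      ≤ Real.exp ε * ∏ i, rapporBitProb ε Δ (B2 i) (B' i) := by
  have hΔ' : (0:ℝ) < 2 * Δ := by positivity
  have ht : 0 ≤ ε / (2 * Δ) := le_of_lt (div_pos hε hΔ')
  have step1 : (∏ i, rapporBitProb ε Δ (B1 i) (B' i)) ≤
      ∏ i, (if B1 i = B2 i then 1 else Real.exp (ε / (2 * Δ))) * rapporBitProb ε Δ (B2 i) (B' i) := by
    apply Finset.prod_le_prod
    · intro i _; exact rapporBitProb_nonneg ε Δ _ _
    · intro i _; exact rapporBitProb_key ε Δ ht _ _ _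
  rw [Finset.prod_mul_distrib] at step1
  refine step1.trans (mul_le_mul_of_nonneg_right ?_ (Finset.prod_nonneg fun i _ => rapporBitProb_nonneg ε Δ _ _))
  have hw : (∏ i, if B1 i = B2 i then (1:ℝ) else Real.exp (ε / (2 * Δ)))
      = Real.exp (ε / (2 * Δ)) ^ (Finset.univ.filter (fun i => B1 i ≠ B2 i)).card := by
    rw [Finset.prod_ite, Finset.prod_const_one, one_mul, Finset.prod_const]
  rw [hw, ← Real.exp_nat_mul]
  apply Real.exp_le_exp.mpr
  have : ((Finset.univ.filter (fun i => B1 i ≠ B2 i)).card : ℝ) ≤ 2 * Δ := by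
    exact_mod_cast hdiff
  rw [div_eq_mul_inv]
  calc ((Finset.univ.filter (fun i => B1 i ≠ B2 i)).card : ℝ) * (ε * (2 * (Δ:ℝ))⁻¹)
      ≤ (2 * (Δ:ℝ)) * (ε * (2 * (Δ:ℝ))⁻¹) := by
        apply mul_le_mul_of_nonneg_right this
        positivity
    _ = ε := by field_simp
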